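/- For every norm η on ℝ², γ₄(η) = 1 + Λ(η): that is, (i) every sequence of 4 points in the closed unit ball of (ℝ², η) admits a wake-up tree rooted at the origin of makespan at most 1 + Λ(η), and (ii) there exist 4 points in the closed unit ball (namely the vertices of a largest inscribed parallelogram) for which every wake-up tree rooted at the origin has makespan at least 1 + Λ(η). -/
import Mathlib


/-- Binary trees with labeled nodes. A wake-up tree with source `s` is modeled by the
subtree hanging at the unique child of the root (the root itself is labeled `s`). -/
inductive BTree (α : Type) where
  | nil : BTree α
  | node : α → BTree α → BTree α → BTree α

namespace BTree
/-- The multiset of labels of a binary tree. -/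
def labels {α : Type} : BTree α → Multiset α
  | .nil => 0
  | .node p l r => p ::ₘ (labels l + labels r)
end BTree

/-- `η` is a norm on `ℝ²`. -/
def IsNorm (η : ℝ × ℝ → ℝ) : Prop :=
  (∀ x, η x = 0 ↔ x = 0) ∧
  (∀ (a : ℝ) (x : ℝ × ℝ), η (a • x) = |a| * η x) ∧
  (∀ x y : ℝ × ℝ, η (x + y) ≤ η x + η y)

/-- The makespan of a wake-up tree: maximum total η-edge-length of a root-to-leaf path,
where the previous (parent) position is `s`. -/
noncomputable def makespan (η : ℝ × ℝ → ℝ) : ℝ × ℝ → BTree (ℝ × ℝ) → ℝ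
  | _, .nil => 0
  | s, .node p l r => η (p - s) + max (makespan η p l) (makespan η p r)

/-- `γₙ(η)`: sup over sequences of `n` points in the closed unit η-ball of the minimum
makespan of a wake-up tree rooted at the origin spanning them. -/
noncomputable def gammaN (η : ℝ × ℝ → ℝ) (n : ℕ) : ℝ :=
  sSup { m : ℝ | ∃ ps : List (ℝ × ℝ), ps.length = n ∧ (∀ p ∈ ps, η p ≤ 1) ∧
    m = sInf { t : ℝ | ∃ T : BTree (ℝ × ℝ), T.labels = ↑ps ∧ makespan η 0 T = t } }

/-- The wake-up ratio `γ(η) = sup_n γₙ(η)`. -/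
noncomputable def gamma (η : ℝ × ℝ → ℝ) : ℝ := sSup (Set.range (gammaN η))

/-- The ℓ1-norm on ℝ². -/
noncomputable def l1 (p : ℝ × ℝ) : ℝ := |p.1| + |p.2|

/-- `Λ(η)`: half the perimeter of the largest parallelogram inscribed in the unit η-ball. -/
noncomputable def Lambda (η : ℝ × ℝ → ℝ) : ℝ :=
  sSup { r : ℝ | ∃ u v : ℝ × ℝ, η u ≤ 1 ∧ η v ≤ 1 ∧ r = η (u + v) + η (u - v) }

set_option maxHeartbeats 1000000

section Basic
variable {η : ℝ × ℝ → ℝ} (hη : IsNorm η)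
include hη

lemma eta_zero : η 0 = 0 := (hη.1 0).mpr rfl

lemma eta_neg (x : ℝ × ℝ) : η (-x) = η x := by
  have := hη.2.1 (-1) x
  simpa using this

lemma eta_nonneg (x : ℝ × ℝ) : 0 ≤ η x := by
  have h := hη.2.2 x (-x)
  rw [add_neg_cancel, eta_zero hη, eta_neg hη] at h
  linarith

lemma eta_sub_comm (x y : ℝ × ℝ) : η (x - y) = η (y - x) := by
  rw [← eta_neg hη (x - y), neg_sub]

lemma eta_sub_le (x y : ℝ × ℝ) : η (x - y) ≤ η x + η y := by
  have := hη.2.2 x (-y)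
  rw [eta_neg hη] at this
  simpa [sub_eq_add_neg] using this

lemma eta_tri (x y z : ℝ × ℝ) : η (x - z) ≤ η (x - y) + η (y - z) := by
  have := hη.2.2 (x - y) (y - z)
  simpa using this

lemma makespan_nonneg (x : ℝ × ℝ) (T : BTree (ℝ × ℝ)) : 0 ≤ makespan η x T := by
  induction T generalizing x with
  | nil => simp [makespan]
  | node p l r ihl ihr =>
    have := eta_nonneg hη (p - x)
    have h2 := le_trans (ihl p) (le_max_left (makespan η p l) (makespan η p r))
    simp only [makespan]; linarith

lemma reach (T : BTree (ℝ × ℝ)) (x y : ℝ × ℝ) (h : y ∈ T.labels) :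
    η (y - x) ≤ makespan η x T := by
  induction T generalizing x with
  | nil => simp [BTree.labels] at h
  | node p l r ihl ihr =>
    simp only [BTree.labels, Multiset.mem_cons, Multiset.mem_add] at h
    rcases h with h | h | h
    · subst h
      have h2 : (0:ℝ) ≤ max (makespan η y l) (makespan η y r) :=
        le_trans (makespan_nonneg hη y l) (le_max_left _ _)
      simp only [makespan]; linarith
    · have h1 := ihl p h
      have h2 := eta_tri hη y p x
      have h3 : makespan η p l ≤ max (makespan η p l) (makespan η p r) := le_max_left _ _
      simp only [makespan]
      linarith [eta_sub_comm hη x p]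
    · have h1 := ihr p h
      have h2 := eta_tri hη y p x
      have h3 : makespan η p r ≤ max (makespan η p l) (makespan η p r) := le_max_right _ _
      simp only [makespan]
      linarith [eta_sub_comm hη x p]

end Basic

section Lam
variable {η : ℝ × ℝ → ℝ} (hη : IsNorm η)
include hη

lemma lambda_bddAbove :
    BddAbove { r : ℝ | ∃ u v : ℝ × ℝ, η u ≤ 1 ∧ η v ≤ 1 ∧ r = η (u + v) + η (u - v) } := by
  refine ⟨4, ?_⟩
  rintro r ⟨u, v, hu, hv, rfl⟩
  have h1 := hη.2.2 u v
  have h2 := eta_sub_le hη u v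
  linarith

lemma lambda_ge (u v : ℝ × ℝ) (hu : η u ≤ 1) (hv : η v ≤ 1) :
    η (u + v) + η (u - v) ≤ Lambda η :=
  le_csSup (lambda_bddAbove hη) ⟨u, v, hu, hv, rfl⟩

lemma exists_unit : ∃ e : ℝ × ℝ, η e = 1 := by
  have h10 : η ((1:ℝ), (0:ℝ)) ≠ 0 := by
    intro h
    have := (hη.1 _).mp h
    simpa [Prod.ext_iff] using this
  have hpos : 0 < η ((1:ℝ), (0:ℝ)) := lt_of_le_of_ne (eta_nonneg hη _) (Ne.symm h10)
  refine ⟨(η ((1:ℝ), (0:ℝ)))⁻¹ • ((1:ℝ), (0:ℝ)), ?_⟩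
  rw [hη.2.1, abs_of_pos (inv_pos.mpr hpos)]
  field_simp

lemma eta_double (e : ℝ × ℝ) : η (e + e) = 2 * η e := by
  have h : e + e = (2:ℝ) • e := (two_smul ℝ e).symm
  rw [h, hη.2.1]
  norm_num

lemma two_le_lambda : 2 ≤ Lambda η := by
  obtain ⟨e, he⟩ := exists_unit hη
  have h := lambda_ge hη e e he.le he.le
  rw [eta_double hη, he, sub_self, eta_zero hη] at h
  linarith

lemma eta_continuous : Continuous η := by
  set C : ℝ := η ((1:ℝ),(0:ℝ)) + η ((0:ℝ),(1:ℝ)) with hC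
  have hC0 : 0 ≤ C := add_nonneg (eta_nonneg hη _) (eta_nonneg hη _)
  have key : ∀ x y : ℝ × ℝ, dist (η x) (η y) ≤ C * dist x y := by
    intro x y
    have hdec : x - y = (x.1 - y.1) • ((1:ℝ),(0:ℝ)) + (x.2 - y.2) • ((0:ℝ),(1:ℝ)) := by
      simp only [Prod.ext_iff, Prod.fst_sub, Prod.snd_sub, Prod.fst_add, Prod.snd_add,
        Prod.smul_mk, Prod.smul_fst, Prod.smul_snd, smul_eq_mul]
      constructor <;> ring
    have h1 : η (x - y) ≤ |x.1 - y.1| * η ((1:ℝ),(0:ℝ)) + |x.2 - y.2| * η ((0:ℝ),(1:ℝ)) := by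
      calc η (x - y) = η ((x.1 - y.1) • ((1:ℝ),(0:ℝ)) + (x.2 - y.2) • ((0:ℝ),(1:ℝ))) := by
            rw [← hdec]
        _ ≤ η ((x.1 - y.1) • ((1:ℝ),(0:ℝ))) + η ((x.2 - y.2) • ((0:ℝ),(1:ℝ))) := hη.2.2 _ _
        _ = |x.1 - y.1| * η ((1:ℝ),(0:ℝ)) + |x.2 - y.2| * η ((0:ℝ),(1:ℝ)) := by
            rw [hη.2.1, hη.2.1]
    have hd1 : |x.1 - y.1| ≤ dist x y := by
      rw [Prod.dist_eq, Real.dist_eq]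
      exact le_max_left _ _ |>.trans' le_rfl |> fun h => le_trans le_rfl h
    have hd2 : |x.2 - y.2| ≤ dist x y := by
      rw [Prod.dist_eq, Real.dist_eq]
      exact le_max_right _ _
    have h2 : η (x - y) ≤ C * dist x y := by
      have e1 := mul_le_mul_of_nonneg_right hd1 (eta_nonneg hη ((1:ℝ),(0:ℝ)))
      have e2 := mul_le_mul_of_nonneg_right hd2 (eta_nonneg hη ((0:ℝ),(1:ℝ)))
      have e3 : C * dist x y = dist x y * η ((1:ℝ),(0:ℝ)) + dist x y * η ((0:ℝ),(1:ℝ)) := by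
        rw [hC]; ring
      linarith
    have habs : |η x - η y| ≤ η (x - y) := by
      rw [abs_sub_le_iff]
      constructor
      · have : η x ≤ η (x - y) + η y := by
          have := hη.2.2 (x - y) y
          simpa using this
        linarith
      · have : η y ≤ η (y - x) + η x := by
          have := hη.2.2 (y - x) x
          simpa using this
        rw [eta_sub_comm hη y x] at this
        linarith
    rw [Real.dist_eq]
    exact le_trans habs h2
  have : LipschitzWith (Real.toNNReal C) η := by
    apply LipschitzWith.of_dist_le_mul
    intro x y
    rw [Real.coe_toNNReal C hC0]
    exact key x y
  exact this.continuous

lemma eta_lower : ∃ c : ℝ, 0 < c ∧ ∀ x : ℝ × ℝ, c * ‖x‖ ≤ η x := by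
  have hsph : IsCompact (Metric.sphere (0 : ℝ × ℝ) 1) := isCompact_sphere 0 1
  have hne : (Metric.sphere (0 : ℝ × ℝ) 1).Nonempty := by
    refine ⟨((1:ℝ),(0:ℝ)), ?_⟩
    simp [Prod.norm_def]
  obtain ⟨x0, hx0, hmin⟩ := hsph.exists_isMinOn hne (eta_continuous hη).continuousOn
  have hx0norm : ‖x0‖ = 1 := mem_sphere_zero_iff_norm.mp hx0
  have hx0ne : x0 ≠ 0 := by
    intro h; rw [h] at hx0norm; simp at hx0norm
  have hc : 0 < η x0 := by
    rcases lt_or_eq_of_le (eta_nonneg hη x0) with h | h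
    · exact h
    · exact absurd ((hη.1 x0).mp h.symm) hx0ne
  refine ⟨η x0, hc, ?_⟩
  intro x
  rcases eq_or_ne x 0 with rfl | hx
  · simp [eta_zero hη]
  · have hnx : 0 < ‖x‖ := norm_pos_iff.mpr hx
    have hmem : ‖x‖⁻¹ • x ∈ Metric.sphere (0 : ℝ × ℝ) 1 := by
      rw [mem_sphere_zero_iff_norm, norm_smul, norm_inv, norm_norm]
      field_simp
    have h1 : η x0 ≤ η (‖x‖⁻¹ • x) := hmin hmem
    have h2 : η (‖x‖⁻¹ • x) = ‖x‖⁻¹ * η x := by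
      rw [hη.2.1, abs_of_pos (inv_pos.mpr hnx)]
    rw [h2] at h1
    rw [mul_comm]
    calc ‖x‖ * η x0 ≤ ‖x‖ * (‖x‖⁻¹ * η x) := by
          apply mul_le_mul_of_nonneg_left h1 hnx.le
      _ = η x := by field_simp

lemma ball_compact : IsCompact {x : ℝ × ℝ | η x ≤ 1} := by
  obtain ⟨c, hc, hlow⟩ := eta_lower hη
  have hclosed : IsClosed {x : ℝ × ℝ | η x ≤ 1} :=
    isClosed_le (eta_continuous hη) continuous_const
  have hsub : {x : ℝ × ℝ | η x ≤ 1} ⊆ Metric.closedBall (0 : ℝ × ℝ) c⁻¹ := by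
    intro x hx
    rw [Metric.mem_closedBall, dist_zero_right]
    have h1 := hlow x
    have h2 : η x ≤ 1 := hx
    have hci : c * c⁻¹ = 1 := mul_inv_cancel₀ hc.ne'
    nlinarith [norm_nonneg x]
  exact (isCompact_closedBall (0 : ℝ × ℝ) c⁻¹).of_isClosed_subset hclosed hsub

lemma lambda_attained : ∃ u v : ℝ × ℝ, η u ≤ 1 ∧ η v ≤ 1 ∧ η (u + v) + η (u - v) = Lambda η := by
  have hK : IsCompact ({x : ℝ × ℝ | η x ≤ 1} ×ˢ {x : ℝ × ℝ | η x ≤ 1}) :=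
    (ball_compact hη).prod (ball_compact hη)
  have hne : ({x : ℝ × ℝ | η x ≤ 1} ×ˢ {x : ℝ × ℝ | η x ≤ 1}).Nonempty := by
    refine ⟨(0, 0), ?_, ?_⟩ <;> simp [eta_zero hη]
  have hcont : Continuous (fun q : (ℝ × ℝ) × (ℝ × ℝ) => η (q.1 + q.2) + η (q.1 - q.2)) := by
    have h1 : Continuous (fun q : (ℝ × ℝ) × (ℝ × ℝ) => q.1 + q.2) := continuous_fst.add continuous_snd
    have h2 : Continuous (fun q : (ℝ × ℝ) × (ℝ × ℝ) => q.1 - q.2) := continuous_fst.sub continuous_snd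
    exact ((eta_continuous hη).comp h1).add ((eta_continuous hη).comp h2)
  obtain ⟨⟨u, v⟩, hmem, hmax⟩ := hK.exists_isMaxOn hne hcont.continuousOn
  refine ⟨u, v, hmem.1, hmem.2, ?_⟩
  apply le_antisymm
  · exact lambda_ge hη u v hmem.1 hmem.2
  · have hne' : { r : ℝ | ∃ u v : ℝ × ℝ, η u ≤ 1 ∧ η v ≤ 1 ∧ r = η (u + v) + η (u - v) }.Nonempty :=
      ⟨η ((0:ℝ×ℝ) + 0) + η ((0:ℝ×ℝ) - 0), 0, 0, (eta_zero hη).le.trans zero_le_one, (eta_zero hη).le.trans zero_le_one, rfl⟩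
    apply csSup_le hne'
    rintro r ⟨a, b, ha, hb, rfl⟩
    exact hmax (Set.mk_mem_prod ha hb)

lemma normalize_fst (u v : ℝ × ℝ) (hu : η u ≤ 1) (hv : η v ≤ 1)
    (hg : η (u + v) + η (u - v) = Lambda η) :
    ∃ u' : ℝ × ℝ, η u' = 1 ∧ η (u' + v) + η (u' - v) = Lambda η := by
  rcases eq_or_lt_of_le (eta_nonneg hη u) with h0 | hpos
  · -- η u = 0, so u = 0 and Λ = 2 η v = 2
    have hu0 : u = 0 := (hη.1 u).mp h0.symm
    subst hu0
    rw [zero_add, zero_sub, eta_neg hη] at hg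
    have h2 := two_le_lambda hη
    have hv1 : η v = 1 := by linarith
    refine ⟨v, hv1, ?_⟩
    rw [eta_double hη, hv1, sub_self, eta_zero hη]
    linarith
  · set s : ℝ := η u with hs
    set u' : ℝ × ℝ := s⁻¹ • u with hu'
    have hs1 : η u' = 1 := by
      rw [hu', hη.2.1, abs_of_pos (inv_pos.mpr hpos), ← hs]
      field_simp
    have hdecp : u + v = s • (u' + v) + (1 - s) • v := by
      rw [hu', smul_add, smul_smul]
      field_simp
      module
    have hdecm : u - v = s • (u' - v) + (1 - s) • (-v) := by
      rw [hu', smul_sub, smul_smul]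
      field_simp
      module
    have hb1 : η (u + v) ≤ s * η (u' + v) + (1 - s) * η v := by
      calc η (u + v) ≤ η (s • (u' + v)) + η ((1 - s) • v) := by rw [hdecp]; exact hη.2.2 _ _
        _ = s * η (u' + v) + (1 - s) * η v := by
            rw [hη.2.1, hη.2.1, abs_of_pos hpos, abs_of_nonneg (by linarith : (0:ℝ) ≤ 1 - s)]
    have hb2 : η (u - v) ≤ s * η (u' - v) + (1 - s) * η v := by
      calc η (u - v) ≤ η (s • (u' - v)) + η ((1 - s) • (-v)) := by rw [hdecm]; exact hη.2.2 _ _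
        _ = s * η (u' - v) + (1 - s) * η v := by
            rw [hη.2.1, hη.2.1, abs_of_pos hpos, abs_of_nonneg (by linarith : (0:ℝ) ≤ 1 - s),
              eta_neg hη]
    have hG : η (u' + v) + η (u' - v) ≤ Lambda η := lambda_ge hη u' v hs1.le hv
    have h2 := two_le_lambda hη
    refine ⟨u', hs1, le_antisymm hG ?_⟩
    nlinarith

lemma exists_uv_unit : ∃ u v : ℝ × ℝ, η u = 1 ∧ η v = 1 ∧
    η (u + v) + η (u - v) = Lambda η := by
  obtain ⟨u0, v0, hu0, hv0, hg0⟩ := lambda_attained hη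
  obtain ⟨u1, hu1, hg1⟩ := normalize_fst hη u0 v0 hu0 hv0 hg0
  have hg1' : η (v0 + u1) + η (v0 - u1) = Lambda η := by
    rw [add_comm v0 u1, eta_sub_comm hη v0 u1]
    exact hg1
  obtain ⟨v1, hv1, hg2⟩ := normalize_fst hη v0 u1 hv0 hu1.le hg1'
  refine ⟨u1, v1, hu1, hv1, ?_⟩
  rw [add_comm u1 v1, eta_sub_comm hη u1 v1]
  exact hg2

end Lam

section Upper
variable {η : ℝ × ℝ → ℝ} (hη : IsNorm η)
include hη

lemma comb3_bound (x y z : ℝ × ℝ) (a b c : ℝ) (hx : η x ≤ 1) (hy : η y ≤ 1) (hz : η z ≤ 1) :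
    η (a • x + b • y + c • z) ≤ |a| + |b| + |c| := by
  have t1 := hη.2.2 (a • x + b • y) (c • z)
  have t2 := hη.2.2 (a • x) (b • y)
  have e1 : η (a • x) = |a| * η x := hη.2.1 a x
  have e2 : η (b • y) = |b| * η y := hη.2.1 b y
  have e3 : η (c • z) = |c| * η z := hη.2.1 c z
  have m1 : |a| * η x ≤ |a| := mul_le_of_le_one_right (abs_nonneg a) hx
  have m2 : |b| * η y ≤ |b| := mul_le_of_le_one_right (abs_nonneg b) hy
  have m3 : |c| * η z ≤ |c| := mul_le_of_le_one_right (abs_nonneg c) hz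
  linarith

lemma comb2_bound (p q : ℝ × ℝ) (a b : ℝ) :
    η (a • p + b • q) ≤ |a| * η p + |b| * η q := by
  have t1 := hη.2.2 (a • p) (b • q)
  rw [hη.2.1, hη.2.1] at t1
  exact t1

lemma caseA (a x y z : ℝ × ℝ) (t b1 b2 b3 : ℝ) (ht : 0 < t)
    (h1 : 0 ≤ b1) (h2 : 0 ≤ b2) (h3 : 0 ≤ b3) (hsum : b1 + b2 + b3 = t)
    (hvec : t • a = b1 • x + b2 • y + b3 • z)
    (ha : η a ≤ 1) (hx : η x ≤ 1) (hy : η y ≤ 1) (hz : η z ≤ 1) :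
    ∃ m q1 q2 q3 : ℝ × ℝ,
      (m ::ₘ q1 ::ₘ q2 ::ₘ q3 ::ₘ (0 : Multiset (ℝ × ℝ))) = (a ::ₘ x ::ₘ y ::ₘ z ::ₘ 0) ∧
      η m ≤ 1 ∧ η q1 ≤ 1 ∧ η q2 ≤ 1 ∧ η q3 ≤ 1 ∧ η ((2:ℝ) • m - q1 - q2) ≤ 2 := by
  have hF := congrArg Prod.fst hvec
  have hS := congrArg Prod.snd hvec
  simp only [Prod.smul_fst, Prod.smul_snd, Prod.fst_add, Prod.snd_add, smul_eq_mul] at hF hS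
  have key : ∀ u v w : ℝ × ℝ, ∀ d1 d2 d3 : ℝ,
      t • ((2:ℝ) • a - u - v) = d1 • u + d2 • v + d3 • w →
      η u ≤ 1 → η v ≤ 1 → η w ≤ 1 → |d1| + |d2| + |d3| ≤ 2 * t →
      η ((2:ℝ) • a - u - v) ≤ 2 := by
    intro u v w d1 d2 d3 hid hu hv hw hd
    have hb := comb3_bound hη u v w d1 d2 d3 hu hv hw
    rw [← hid, hη.2.1, abs_of_pos ht] at hb
    nlinarith
  rcases le_or_gt (2 * b3) t with h | h
  · refine ⟨a, x, y, z, rfl, ha, hx, hy, hz, ?_⟩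
    refine key x y z (2*b1 - t) (2*b2 - t) (2*b3) ?_ hx hy hz ?_
    · apply Prod.ext
      · simp only [Prod.smul_fst, Prod.smul_snd, Prod.fst_add, Prod.snd_add, Prod.fst_sub,
          Prod.snd_sub, smul_eq_mul]
        linear_combination 2 * hF
      · simp only [Prod.smul_fst, Prod.smul_snd, Prod.fst_add, Prod.snd_add, Prod.fst_sub,
          Prod.snd_sub, smul_eq_mul]
        linear_combination 2 * hS
    · rw [abs_of_nonneg (by linarith : (0:ℝ) ≤ 2*b3)]
      rcases abs_cases (2*b1 - t) with ⟨e1, _⟩ | ⟨e1, _⟩ <;>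
        rcases abs_cases (2*b2 - t) with ⟨e2, _⟩ | ⟨e2, _⟩ <;> linarith
  · have h1' : 2 * b1 ≤ t := by linarith
    refine ⟨a, y, z, x, ?_, ha, hy, hz, hx, ?_⟩
    · rw [Multiset.cons_swap z x, Multiset.cons_swap y x]
    · refine key y z x (2*b2 - t) (2*b3 - t) (2*b1) ?_ hy hz hx ?_
      · apply Prod.ext
        · simp only [Prod.smul_fst, Prod.smul_snd, Prod.fst_add, Prod.snd_add, Prod.fst_sub,
            Prod.snd_sub, smul_eq_mul]
          linear_combination 2 * hF
        · simp only [Prod.smul_fst, Prod.smul_snd, Prod.fst_add, Prod.snd_add, Prod.fst_sub,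
            Prod.snd_sub, smul_eq_mul]
          linear_combination 2 * hS
      · rw [abs_of_nonneg (by linarith : (0:ℝ) ≤ 2*b1)]
        rcases abs_cases (2*b2 - t) with ⟨e1, _⟩ | ⟨e1, _⟩ <;>
          rcases abs_cases (2*b3 - t) with ⟨e2, _⟩ | ⟨e2, _⟩ <;> linarith

lemma caseB (x y z w : ℝ × ℝ) (t bx bY bz bw : ℝ) (ht : 0 < t)
    (hbx : 0 ≤ bx) (hby : 0 ≤ bY) (hbz : 0 ≤ bz) (hbw : 0 ≤ bw)
    (hs1 : bx + bY = t) (hs2 : bz + bw = t)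
    (hvec : bx • x + bY • y = bz • z + bw • w)
    (hx : η x ≤ 1) (hy : η y ≤ 1) (hz : η z ≤ 1) (hw : η w ≤ 1) :
    ∃ m q1 q2 q3 : ℝ × ℝ,
      (m ::ₘ q1 ::ₘ q2 ::ₘ q3 ::ₘ (0 : Multiset (ℝ × ℝ))) = (x ::ₘ y ::ₘ z ::ₘ w ::ₘ 0) ∧
      η m ≤ 1 ∧ η q1 ≤ 1 ∧ η q2 ≤ 1 ∧ η q3 ≤ 1 ∧ η ((2:ℝ) • m - q1 - q2) ≤ 2 := by
  have hF := congrArg Prod.fst hvec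
  have hS := congrArg Prod.snd hvec
  simp only [Prod.smul_fst, Prod.smul_snd, Prod.fst_add, Prod.snd_add, smul_eq_mul] at hF hS
  set D := η (x - y) with hDdef
  set E := η (z - w) with hEdef
  have hD2 : D ≤ 2 := by have := eta_sub_le hη x y; rw [← hDdef] at this; linarith
  have hE2 : E ≤ 2 := by have := eta_sub_le hη z w; rw [← hEdef] at this; linarith
  have key : ∀ m q1 q2 : ℝ × ℝ, ∀ d1 d2 : ℝ,
      t • ((2:ℝ) • m - q1 - q2) = d1 • (x - y) + d2 • (z - w) →
      |d1| * D + |d2| * E ≤ 2 * t →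
      η ((2:ℝ) • m - q1 - q2) ≤ 2 := by
    intro m q1 q2 d1 d2 hid hd
    have hb := comb2_bound hη (x - y) (z - w) d1 d2
    rw [← hid, hη.2.1, abs_of_pos ht, ← hDdef, ← hEdef] at hb
    nlinarith
  have I2 : t • ((2:ℝ) • y - z - w) = (-(2*bx)) • (x - y) + (2*bz - t) • (z - w) := by
    apply Prod.ext
    · simp only [Prod.smul_fst, Prod.smul_snd, Prod.fst_add, Prod.snd_add, Prod.fst_sub,
        Prod.snd_sub, smul_eq_mul]
      linear_combination 2 * hF - 2 * y.1 * hs1 + 2 * w.1 * hs2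
    · simp only [Prod.smul_fst, Prod.smul_snd, Prod.fst_add, Prod.snd_add, Prod.fst_sub,
        Prod.snd_sub, smul_eq_mul]
      linear_combination 2 * hS - 2 * y.2 * hs1 + 2 * w.2 * hs2
  have I1 : t • ((2:ℝ) • x - z - w) = (2*bY) • (x - y) + (2*bz - t) • (z - w) := by
    apply Prod.ext
    · simp only [Prod.smul_fst, Prod.smul_snd, Prod.fst_add, Prod.snd_add, Prod.fst_sub,
        Prod.snd_sub, smul_eq_mul]
      linear_combination 2 * hF - 2 * x.1 * hs1 + 2 * w.1 * hs2
    · simp only [Prod.smul_fst, Prod.smul_snd, Prod.fst_add, Prod.snd_add, Prod.fst_sub,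
        Prod.snd_sub, smul_eq_mul]
      linear_combination 2 * hS - 2 * x.2 * hs1 + 2 * w.2 * hs2
  have I3 : t • ((2:ℝ) • z - x - y) = (2*bx - t) • (x - y) + (2*bw) • (z - w) := by
    apply Prod.ext
    · simp only [Prod.smul_fst, Prod.smul_snd, Prod.fst_add, Prod.snd_add, Prod.fst_sub,
        Prod.snd_sub, smul_eq_mul]
      linear_combination (-2) * hF - 2 * z.1 * hs2 + 2 * y.1 * hs1
    · simp only [Prod.smul_fst, Prod.smul_snd, Prod.fst_add, Prod.snd_add, Prod.fst_sub,
        Prod.snd_sub, smul_eq_mul]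
      linear_combination (-2) * hS - 2 * z.2 * hs2 + 2 * y.2 * hs1
  have I4 : t • ((2:ℝ) • w - x - y) = (2*bx - t) • (x - y) + (-(2*bz)) • (z - w) := by
    apply Prod.ext
    · simp only [Prod.smul_fst, Prod.smul_snd, Prod.fst_add, Prod.snd_add, Prod.fst_sub,
        Prod.snd_sub, smul_eq_mul]
      linear_combination (-2) * hF - 2 * w.1 * hs2 + 2 * y.1 * hs1
    · simp only [Prod.smul_fst, Prod.smul_snd, Prod.fst_add, Prod.snd_add, Prod.fst_sub,
        Prod.snd_sub, smul_eq_mul]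
      linear_combination (-2) * hS - 2 * w.2 * hs2 + 2 * y.2 * hs1
  have hDn : 0 ≤ D := eta_nonneg hη _
  have hEn : 0 ≤ E := eta_nonneg hη _
  rcases le_or_gt (2*bx) t with hx2 | hx2 <;> rcases le_or_gt (2*bz) t with hz2 | hz2
  · -- bx small, bz small : use middle y (U2 = 2bx D + (t-2bz) E) or middle w (U4 = 2bz E + (t-2bx) D)
    rcases le_total (2*bx*D + (t-2*bz)*E) (2*bz*E + (t-2*bx)*D) with hcmp | hcmp
    · refine ⟨y, z, w, x, ?_, hy, hz, hw, hx, ?_⟩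
      · rw [Multiset.cons_swap w x, Multiset.cons_swap z x, Multiset.cons_swap y x]
      · refine key y z w (-(2*bx)) (2*bz - t) I2 ?_
        rw [abs_neg, abs_of_nonneg (by linarith : (0:ℝ) ≤ 2*bx),
          abs_of_nonpos (by linarith : 2*bz - t ≤ 0)]
        nlinarith [mul_le_mul_of_nonneg_left hD2 ht.le, mul_le_mul_of_nonneg_left hE2 ht.le]
    · refine ⟨w, x, y, z, ?_, hw, hx, hy, hz, ?_⟩
      · rw [Multiset.cons_swap w x, Multiset.cons_swap w y, Multiset.cons_swap w z]
      · refine key w x y (2*bx - t) (-(2*bz)) I4 ?_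
        rw [abs_neg, abs_of_nonneg (by linarith : (0:ℝ) ≤ 2*bz),
          abs_of_nonpos (by linarith : 2*bx - t ≤ 0)]
        nlinarith [mul_le_mul_of_nonneg_left hD2 ht.le, mul_le_mul_of_nonneg_left hE2 ht.le]
  · -- bx small, bz big : middle y (U2 = 2bx D + (2bz-t) E) or middle z (U3 = (t-2bx) D + 2bw E)
    rcases le_total (2*bx*D + (2*bz-t)*E) ((t-2*bx)*D + 2*bw*E) with hcmp | hcmp
    · refine ⟨y, z, w, x, ?_, hy, hz, hw, hx, ?_⟩
      · rw [Multiset.cons_swap w x, Multiset.cons_swap z x, Multiset.cons_swap y x]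
      · refine key y z w (-(2*bx)) (2*bz - t) I2 ?_
        rw [abs_neg, abs_of_nonneg (by linarith : (0:ℝ) ≤ 2*bx),
          abs_of_nonneg (by linarith : (0:ℝ) ≤ 2*bz - t)]
        nlinarith [mul_le_mul_of_nonneg_left hD2 ht.le, mul_le_mul_of_nonneg_left hE2 ht.le]
    · refine ⟨z, x, y, w, ?_, hz, hx, hy, hw, ?_⟩
      · rw [Multiset.cons_swap z x, Multiset.cons_swap z y]
      · refine key z x y (2*bx - t) (2*bw) I3 ?_
        rw [abs_of_nonneg (by linarith : (0:ℝ) ≤ 2*bw),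
          abs_of_nonpos (by linarith : 2*bx - t ≤ 0)]
        nlinarith [mul_le_mul_of_nonneg_left hD2 ht.le, mul_le_mul_of_nonneg_left hE2 ht.le]
  · -- bx big, bz small : middle x (U1 = 2bY D + (t-2bz) E) or middle w (U4 = (2bx-t) D + 2bz E)
    rcases le_total (2*bY*D + (t-2*bz)*E) ((2*bx-t)*D + 2*bz*E) with hcmp | hcmp
    · refine ⟨x, z, w, y, ?_, hx, hz, hw, hy, ?_⟩
      · rw [Multiset.cons_swap w y, Multiset.cons_swap z y]
      · refine key x z w (2*bY) (2*bz - t) I1 ?_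
        rw [abs_of_nonneg (by linarith : (0:ℝ) ≤ 2*bY),
          abs_of_nonpos (by linarith : 2*bz - t ≤ 0)]
        nlinarith [mul_le_mul_of_nonneg_left hD2 ht.le, mul_le_mul_of_nonneg_left hE2 ht.le]
    · refine ⟨w, x, y, z, ?_, hw, hx, hy, hz, ?_⟩
      · rw [Multiset.cons_swap w x, Multiset.cons_swap w y, Multiset.cons_swap w z]
      · refine key w x y (2*bx - t) (-(2*bz)) I4 ?_
        rw [abs_neg, abs_of_nonneg (by linarith : (0:ℝ) ≤ 2*bz),
          abs_of_nonneg (by linarith : (0:ℝ) ≤ 2*bx - t)]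
        nlinarith [mul_le_mul_of_nonneg_left hD2 ht.le, mul_le_mul_of_nonneg_left hE2 ht.le]
  · -- bx big, bz big : middle x (U1 = 2bY D + (2bz-t) E) or middle z (U3 = (2bx-t) D + 2bw E)
    rcases le_total (2*bY*D + (2*bz-t)*E) ((2*bx-t)*D + 2*bw*E) with hcmp | hcmp
    · refine ⟨x, z, w, y, ?_, hx, hz, hw, hy, ?_⟩
      · rw [Multiset.cons_swap w y, Multiset.cons_swap z y]
      · refine key x z w (2*bY) (2*bz - t) I1 ?_
        rw [abs_of_nonneg (by linarith : (0:ℝ) ≤ 2*bY),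
          abs_of_nonneg (by linarith : (0:ℝ) ≤ 2*bz - t)]
        nlinarith [mul_le_mul_of_nonneg_left hD2 ht.le, mul_le_mul_of_nonneg_left hE2 ht.le]
    · refine ⟨z, x, y, w, ?_, hz, hx, hy, hw, ?_⟩
      · rw [Multiset.cons_swap z x, Multiset.cons_swap z y]
      · refine key z x y (2*bx - t) (2*bw) I3 ?_
        rw [abs_of_nonneg (by linarith : (0:ℝ) ≤ 2*bw),
          abs_of_nonneg (by linarith : (0:ℝ) ≤ 2*bx - t)]
        nlinarith [mul_le_mul_of_nonneg_left hD2 ht.le, mul_le_mul_of_nonneg_left hE2 ht.le]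

end Upper

section Build
variable {η : ℝ × ℝ → ℝ} (hη : IsNorm η)
include hη

lemma buildTree' (a q1 q2 q3 : ℝ × ℝ) (ha : η a ≤ 1) (h1 : η q1 ≤ 1) (h2 : η q2 ≤ 1)
    (h3 : η q3 ≤ 1) (hmid : η ((2:ℝ) • a - q1 - q2) ≤ 2) :
    ∃ T : BTree (ℝ × ℝ), T.labels = (a ::ₘ q1 ::ₘ q2 ::ₘ q3 ::ₘ 0) ∧
      makespan η 0 T ≤ 1 + Lambda η := by
  refine ⟨.node q1 (.node a (.node q2 .nil .nil) .nil) (.node q3 .nil .nil), ?_, ?_⟩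
  · show (q1 ::ₘ ((a ::ₘ ((q2 ::ₘ (0 + 0)) + 0)) + (q3 ::ₘ (0 + 0))) : Multiset (ℝ × ℝ)) = _
    rw [show ((0:Multiset (ℝ×ℝ)) + 0) = 0 from rfl]
    rw [add_zero, Multiset.cons_add, Multiset.cons_add, zero_add, Multiset.cons_swap q1 a]
  · have hchain : η (a - q1) + η (q2 - a) ≤ Lambda η := by
      set u : ℝ × ℝ := (2⁻¹ : ℝ) • ((2:ℝ) • a - q1 - q2) with hu
      set v : ℝ × ℝ := (2⁻¹ : ℝ) • (q2 - q1) with hv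
      have hu1 : η u ≤ 1 := by
        rw [hu, hη.2.1]
        rw [abs_of_pos (by norm_num : (0:ℝ) < 2⁻¹)]
        linarith
      have hv1 : η v ≤ 1 := by
        rw [hv, hη.2.1, abs_of_pos (by norm_num : (0:ℝ) < 2⁻¹)]
        have := eta_sub_le hη q2 q1
        linarith
      have huv1 : u + v = a - q1 := by
        rw [hu, hv]
        apply Prod.ext <;>
          (simp only [Prod.smul_fst, Prod.smul_snd, Prod.fst_add, Prod.snd_add, Prod.fst_sub,
            Prod.snd_sub, smul_eq_mul]; ring)
      have huv2 : u - v = a - q2 := by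
        rw [hu, hv]
        apply Prod.ext <;>
          (simp only [Prod.smul_fst, Prod.smul_snd, Prod.fst_add, Prod.snd_add, Prod.fst_sub,
            Prod.snd_sub, smul_eq_mul]; ring)
      have := lambda_ge hη u v hu1 hv1
      rw [huv1, huv2] at this
      rw [eta_sub_comm hη q2 a]
      linarith
    have hbr2 : η (q3 - q1) ≤ 2 := by
      have := eta_sub_le hη q3 q1
      linarith
    have h2l := two_le_lambda hη
    show η (q1 - 0) + max (η (a - q1) + max (η (q2 - a) + max (makespan η q2 .nil) (makespan η q2 .nil)) (makespan η a .nil)) (η (q3 - q1) + max (makespan η q3 .nil) (makespan η q3 .nil)) ≤ 1 + Lambda η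
    show η (q1 - 0) + max (η (a - q1) + max (η (q2 - a) + max 0 0) 0) (η (q3 - q1) + max 0 0) ≤ 1 + Lambda η
    rw [max_self, add_zero, add_zero, max_eq_left (eta_nonneg hη (q2 - a)), sub_zero]
    have hmax : max (η (a - q1) + η (q2 - a)) (η (q3 - q1)) ≤ Lambda η :=
      max_le hchain (by linarith)
    linarith [le_max_left (η (a - q1) + η (q2 - a)) (η (q3 - q1))]

end Build

section UpMain
variable {η : ℝ × ℝ → ℝ} (hη : IsNorm η)
include hη

lemma upper_main (ps : List (ℝ × ℝ)) (hlen : ps.length = 4) (hball : ∀ p ∈ ps, η p ≤ 1) :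
    ∃ T : BTree (ℝ × ℝ), T.labels = ↑ps ∧ makespan η 0 T ≤ 1 + Lambda η := by
  obtain ⟨p0, p1, p2, p3, rfl⟩ : ∃ a b c d, ps = [a, b, c, d] := by
    match ps, hlen with
    | [a, b, c, d], _ => exact ⟨a, b, c, d, rfl⟩
  have h0 : η p0 ≤ 1 := hball p0 (by simp)
  have h1 : η p1 ≤ 1 := hball p1 (by simp)
  have h2 : η p2 ≤ 1 := hball p2 (by simp)
  have h3 : η p3 ≤ 1 := hball p3 (by simp)
  have hdep : ¬ LinearIndependent ℝ ![p1 - p0, p2 - p0, p3 - p0] := by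
    intro h
    have hc := h.fintype_card_le_finrank
    rw [Fintype.card_fin] at hc
    have hfr : Module.finrank ℝ (ℝ × ℝ) = 2 := by simp [Module.finrank_prod]
    omega
  obtain ⟨g, hg, i, hgi⟩ := Fintype.not_linearIndependent_iff.mp hdep
  rw [Fin.sum_univ_three] at hg
  simp only [Matrix.cons_val_zero, Matrix.cons_val_one, Matrix.head_cons,
    Matrix.cons_val_two, Matrix.tail_cons] at hg
  have hF := congrArg Prod.fst hg
  have hS := congrArg Prod.snd hg
  simp only [Prod.smul_fst, Prod.smul_snd, Prod.fst_add, Prod.snd_add, Prod.fst_sub,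
    Prod.snd_sub, smul_eq_mul, Prod.fst_zero, Prod.snd_zero] at hF hS
  set c1 : ℝ := g 0 with hc1d
  set c2 : ℝ := g 1 with hc2d
  set c3 : ℝ := g 2 with hc3d
  set c0 : ℝ := -(c1 + c2 + c3) with hc0d
  have hF' : c0 * p0.1 + c1 * p1.1 + c2 * p2.1 + c3 * p3.1 = 0 := by
    rw [hc0d]; linear_combination hF
  have hS' : c0 * p0.2 + c1 * p1.2 + c2 * p2.2 + c3 * p3.2 = 0 := by
    rw [hc0d]; linear_combination hS
  have hsum0 : c0 + c1 + c2 + c3 = 0 := by rw [hc0d]; ring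
  have hnz : ¬ (c1 = 0 ∧ c2 = 0 ∧ c3 = 0) := by
    rintro ⟨e1, e2, e3⟩
    fin_cases i <;> simp_all
  clear hg hF hS hc0d hc1d hc2d hc3d hgi hdep
  rcases le_or_gt 0 c0 with s0 | s0 <;> rcases le_or_gt 0 c1 with s1 | s1 <;>
    rcases le_or_gt 0 c2 with s2 | s2 <;> rcases le_or_gt 0 c3 with s3 | s3
  · exact absurd ⟨by linarith, by linarith, by linarith⟩ hnz
  · obtain ⟨m, q1, q2, q3, hperm, hm1, hm2, hm3, hm4, hmid⟩ :=
      caseA hη p3 p0 p1 p2 (-c3) c0 c1 c2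
        (by linarith) (by linarith) (by linarith) (by linarith) (by linarith)
        (by
          apply Prod.ext
          · simp only [Prod.smul_fst, Prod.fst_add, smul_eq_mul]
            linear_combination -hF'
          · simp only [Prod.smul_snd, Prod.snd_add, smul_eq_mul]
            linear_combination -hS')
        h3 h0 h1 h2
    obtain ⟨T, hT, hmk⟩ := buildTree' hη m q1 q2 q3 hm1 hm2 hm3 hm4 hmid
    refine ⟨T, ?_, hmk⟩
    rw [hT, hperm]
    rw [Multiset.cons_swap p3 p0, Multiset.cons_swap p3 p1, Multiset.cons_swap p3 p2]
    rfl
  · obtain ⟨m, q1, q2, q3, hperm, hm1, hm2, hm3, hm4, hmid⟩ :=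
      caseA hη p2 p0 p1 p3 (-c2) c0 c1 c3
        (by linarith) (by linarith) (by linarith) (by linarith) (by linarith)
        (by
          apply Prod.ext
          · simp only [Prod.smul_fst, Prod.fst_add, smul_eq_mul]
            linear_combination -hF'
          · simp only [Prod.smul_snd, Prod.snd_add, smul_eq_mul]
            linear_combination -hS')
        h2 h0 h1 h3
    obtain ⟨T, hT, hmk⟩ := buildTree' hη m q1 q2 q3 hm1 hm2 hm3 hm4 hmid
    refine ⟨T, ?_, hmk⟩
    rw [hT, hperm]
    rw [Multiset.cons_swap p2 p0, Multiset.cons_swap p2 p1]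
    rfl
  · obtain ⟨m, q1, q2, q3, hperm, hm1, hm2, hm3, hm4, hmid⟩ :=
      caseB hη p0 p1 p2 p3 (c0 + c1) c0 c1 (-c2) (-c3)
        (by linarith) (by linarith) (by linarith) (by linarith) (by linarith)
        (by linarith) (by linarith)
        (by
          apply Prod.ext
          · simp only [Prod.smul_fst, Prod.fst_add, smul_eq_mul]
            linear_combination hF'
          · simp only [Prod.smul_snd, Prod.snd_add, smul_eq_mul]
            linear_combination hS')
        h0 h1 h2 h3
    obtain ⟨T, hT, hmk⟩ := buildTree' hη m q1 q2 q3 hm1 hm2 hm3 hm4 hmid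
    refine ⟨T, ?_, hmk⟩
    rw [hT, hperm]
    rfl
  · obtain ⟨m, q1, q2, q3, hperm, hm1, hm2, hm3, hm4, hmid⟩ :=
      caseA hη p1 p0 p2 p3 (-c1) c0 c2 c3
        (by linarith) (by linarith) (by linarith) (by linarith) (by linarith)
        (by
          apply Prod.ext
          · simp only [Prod.smul_fst, Prod.fst_add, smul_eq_mul]
            linear_combination -hF'
          · simp only [Prod.smul_snd, Prod.snd_add, smul_eq_mul]
            linear_combination -hS')
        h1 h0 h2 h3
    obtain ⟨T, hT, hmk⟩ := buildTree' hη m q1 q2 q3 hm1 hm2 hm3 hm4 hmid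
    refine ⟨T, ?_, hmk⟩
    rw [hT, hperm]
    rw [Multiset.cons_swap p1 p0]
    rfl
  · obtain ⟨m, q1, q2, q3, hperm, hm1, hm2, hm3, hm4, hmid⟩ :=
      caseB hη p0 p2 p1 p3 (c0 + c2) c0 c2 (-c1) (-c3)
        (by linarith) (by linarith) (by linarith) (by linarith) (by linarith)
        (by linarith) (by linarith)
        (by
          apply Prod.ext
          · simp only [Prod.smul_fst, Prod.fst_add, smul_eq_mul]
            linear_combination hF'
          · simp only [Prod.smul_snd, Prod.snd_add, smul_eq_mul]
            linear_combination hS')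
        h0 h2 h1 h3
    obtain ⟨T, hT, hmk⟩ := buildTree' hη m q1 q2 q3 hm1 hm2 hm3 hm4 hmid
    refine ⟨T, ?_, hmk⟩
    rw [hT, hperm]
    rw [Multiset.cons_swap p2 p1]
    rfl
  · obtain ⟨m, q1, q2, q3, hperm, hm1, hm2, hm3, hm4, hmid⟩ :=
      caseB hη p0 p3 p1 p2 (c0 + c3) c0 c3 (-c1) (-c2)
        (by linarith) (by linarith) (by linarith) (by linarith) (by linarith)
        (by linarith) (by linarith)
        (by
          apply Prod.ext
          · simp only [Prod.smul_fst, Prod.fst_add, smul_eq_mul]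
            linear_combination hF'
          · simp only [Prod.smul_snd, Prod.snd_add, smul_eq_mul]
            linear_combination hS')
        h0 h3 h1 h2
    obtain ⟨T, hT, hmk⟩ := buildTree' hη m q1 q2 q3 hm1 hm2 hm3 hm4 hmid
    refine ⟨T, ?_, hmk⟩
    rw [hT, hperm]
    rw [Multiset.cons_swap p3 p1, Multiset.cons_swap p3 p2]
    rfl
  · obtain ⟨m, q1, q2, q3, hperm, hm1, hm2, hm3, hm4, hmid⟩ :=
      caseA hη p0 p1 p2 p3 (c0) (-c1) (-c2) (-c3)
        (by linarith) (by linarith) (by linarith) (by linarith) (by linarith)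
        (by
          apply Prod.ext
          · simp only [Prod.smul_fst, Prod.fst_add, smul_eq_mul]
            linear_combination hF'
          · simp only [Prod.smul_snd, Prod.snd_add, smul_eq_mul]
            linear_combination hS')
        h0 h1 h2 h3
    obtain ⟨T, hT, hmk⟩ := buildTree' hη m q1 q2 q3 hm1 hm2 hm3 hm4 hmid
    refine ⟨T, ?_, hmk⟩
    rw [hT, hperm]
    rfl
  · obtain ⟨m, q1, q2, q3, hperm, hm1, hm2, hm3, hm4, hmid⟩ :=
      caseA hη p0 p1 p2 p3 (-c0) c1 c2 c3
        (by linarith) (by linarith) (by linarith) (by linarith) (by linarith)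
        (by
          apply Prod.ext
          · simp only [Prod.smul_fst, Prod.fst_add, smul_eq_mul]
            linear_combination -hF'
          · simp only [Prod.smul_snd, Prod.snd_add, smul_eq_mul]
            linear_combination -hS')
        h0 h1 h2 h3
    obtain ⟨T, hT, hmk⟩ := buildTree' hη m q1 q2 q3 hm1 hm2 hm3 hm4 hmid
    refine ⟨T, ?_, hmk⟩
    rw [hT, hperm]
    rfl
  · obtain ⟨m, q1, q2, q3, hperm, hm1, hm2, hm3, hm4, hmid⟩ :=
      caseB hη p1 p2 p0 p3 (c1 + c2) c1 c2 (-c0) (-c3)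
        (by linarith) (by linarith) (by linarith) (by linarith) (by linarith)
        (by linarith) (by linarith)
        (by
          apply Prod.ext
          · simp only [Prod.smul_fst, Prod.fst_add, smul_eq_mul]
            linear_combination hF'
          · simp only [Prod.smul_snd, Prod.snd_add, smul_eq_mul]
            linear_combination hS')
        h1 h2 h0 h3
    obtain ⟨T, hT, hmk⟩ := buildTree' hη m q1 q2 q3 hm1 hm2 hm3 hm4 hmid
    refine ⟨T, ?_, hmk⟩
    rw [hT, hperm]
    rw [Multiset.cons_swap p2 p0, Multiset.cons_swap p1 p0]
    rfl
  · obtain ⟨m, q1, q2, q3, hperm, hm1, hm2, hm3, hm4, hmid⟩ :=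
      caseB hη p1 p3 p0 p2 (c1 + c3) c1 c3 (-c0) (-c2)
        (by linarith) (by linarith) (by linarith) (by linarith) (by linarith)
        (by linarith) (by linarith)
        (by
          apply Prod.ext
          · simp only [Prod.smul_fst, Prod.fst_add, smul_eq_mul]
            linear_combination hF'
          · simp only [Prod.smul_snd, Prod.snd_add, smul_eq_mul]
            linear_combination hS')
        h1 h3 h0 h2
    obtain ⟨T, hT, hmk⟩ := buildTree' hη m q1 q2 q3 hm1 hm2 hm3 hm4 hmid
    refine ⟨T, ?_, hmk⟩
    rw [hT, hperm]
    rw [Multiset.cons_swap p3 p0, Multiset.cons_swap p3 p2, Multiset.cons_swap p1 p0]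
    rfl
  · obtain ⟨m, q1, q2, q3, hperm, hm1, hm2, hm3, hm4, hmid⟩ :=
      caseA hη p1 p0 p2 p3 (c1) (-c0) (-c2) (-c3)
        (by linarith) (by linarith) (by linarith) (by linarith) (by linarith)
        (by
          apply Prod.ext
          · simp only [Prod.smul_fst, Prod.fst_add, smul_eq_mul]
            linear_combination hF'
          · simp only [Prod.smul_snd, Prod.snd_add, smul_eq_mul]
            linear_combination hS')
        h1 h0 h2 h3
    obtain ⟨T, hT, hmk⟩ := buildTree' hη m q1 q2 q3 hm1 hm2 hm3 hm4 hmid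
    refine ⟨T, ?_, hmk⟩
    rw [hT, hperm]
    rw [Multiset.cons_swap p1 p0]
    rfl
  · obtain ⟨m, q1, q2, q3, hperm, hm1, hm2, hm3, hm4, hmid⟩ :=
      caseB hη p2 p3 p0 p1 (c2 + c3) c2 c3 (-c0) (-c1)
        (by linarith) (by linarith) (by linarith) (by linarith) (by linarith)
        (by linarith) (by linarith)
        (by
          apply Prod.ext
          · simp only [Prod.smul_fst, Prod.fst_add, smul_eq_mul]
            linear_combination hF'
          · simp only [Prod.smul_snd, Prod.snd_add, smul_eq_mul]
            linear_combination hS')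
        h2 h3 h0 h1
    obtain ⟨T, hT, hmk⟩ := buildTree' hη m q1 q2 q3 hm1 hm2 hm3 hm4 hmid
    refine ⟨T, ?_, hmk⟩
    rw [hT, hperm]
    rw [Multiset.cons_swap p3 p0, Multiset.cons_swap p3 p1, Multiset.cons_swap p2 p0, Multiset.cons_swap p2 p1]
    rfl
  · obtain ⟨m, q1, q2, q3, hperm, hm1, hm2, hm3, hm4, hmid⟩ :=
      caseA hη p2 p0 p1 p3 (c2) (-c0) (-c1) (-c3)
        (by linarith) (by linarith) (by linarith) (by linarith) (by linarith)
        (by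
          apply Prod.ext
          · simp only [Prod.smul_fst, Prod.fst_add, smul_eq_mul]
            linear_combination hF'
          · simp only [Prod.smul_snd, Prod.snd_add, smul_eq_mul]
            linear_combination hS')
        h2 h0 h1 h3
    obtain ⟨T, hT, hmk⟩ := buildTree' hη m q1 q2 q3 hm1 hm2 hm3 hm4 hmid
    refine ⟨T, ?_, hmk⟩
    rw [hT, hperm]
    rw [Multiset.cons_swap p2 p0, Multiset.cons_swap p2 p1]
    rfl
  · obtain ⟨m, q1, q2, q3, hperm, hm1, hm2, hm3, hm4, hmid⟩ :=
      caseA hη p3 p0 p1 p2 (c3) (-c0) (-c1) (-c2)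
        (by linarith) (by linarith) (by linarith) (by linarith) (by linarith)
        (by
          apply Prod.ext
          · simp only [Prod.smul_fst, Prod.fst_add, smul_eq_mul]
            linear_combination hF'
          · simp only [Prod.smul_snd, Prod.snd_add, smul_eq_mul]
            linear_combination hS')
        h3 h0 h1 h2
    obtain ⟨T, hT, hmk⟩ := buildTree' hη m q1 q2 q3 hm1 hm2 hm3 hm4 hmid
    refine ⟨T, ?_, hmk⟩
    rw [hT, hperm]
    rw [Multiset.cons_swap p3 p0, Multiset.cons_swap p3 p1, Multiset.cons_swap p3 p2]
    rfl
  · linarith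

end UpMain

section Lower
variable {η : ℝ × ℝ → ℝ} (hη : IsNorm η)
include hη

lemma subtree_two (t : BTree (ℝ × ℝ)) (x : ℝ × ℝ) (h2 : 2 ≤ Multiset.card t.labels) :
    ∃ a : ℝ × ℝ, ∃ Z : Multiset (ℝ × ℝ), t.labels = a ::ₘ Z ∧
      ∃ y ∈ Z, η (a - x) + η (y - a) ≤ makespan η x t := by
  cases t with
  | nil => simp [BTree.labels] at h2
  | node p l r =>
    refine ⟨p, l.labels + r.labels, rfl, ?_⟩
    have hcard : 0 < Multiset.card (l.labels + r.labels) := by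
      simp only [BTree.labels, Multiset.card_cons] at h2
      omega
    obtain ⟨y, hy⟩ := Multiset.card_pos_iff_exists_mem.mp hcard
    refine ⟨y, hy, ?_⟩
    rcases Multiset.mem_add.mp hy with h | h
    · have hr := reach hη l p y h
      have hmax : makespan η p l ≤ max (makespan η p l) (makespan η p r) := le_max_left _ _
      simp only [makespan]
      linarith
    · have hr := reach hη r p y h
      have hmax : makespan η p r ≤ max (makespan η p l) (makespan η p r) := le_max_right _ _
      simp only [makespan]
      linarith

lemma lb_core (u v : ℝ × ℝ) (hu : η u = 1) (hv : η v = 1)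
    (hL : Lambda η ≤ η (u + v) + η (u - v)) (a y : ℝ × ℝ) (Z : Multiset (ℝ × ℝ))
    (hZ : a ::ₘ Z = (-u) ::ₘ v ::ₘ (-v) ::ₘ 0) (hy : y ∈ Z) :
    Lambda η ≤ η (a - u) + η (y - a) := by
  have hpv : η (u + v) ≤ 2 := by have := hη.2.2 u v; linarith
  have hmv : η (u - v) ≤ 2 := by have := eta_sub_le hη u v; linarith
  have ha : a ∈ (-u) ::ₘ v ::ₘ (-v) ::ₘ (0 : Multiset (ℝ × ℝ)) := by
    rw [← hZ]; exact Multiset.mem_cons_self a Z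
  simp only [Multiset.mem_cons, Multiset.notMem_zero, or_false] at ha
  rcases ha with ha | ha | ha
  · -- a = -u
    rw [ha] at hZ ⊢
    have hZ' : Z = v ::ₘ (-v) ::ₘ 0 := (Multiset.cons_inj_right _).mp hZ
    rw [hZ'] at hy
    simp only [Multiset.mem_cons, Multiset.notMem_zero, or_false] at hy
    have e1 : η (-u - u) = 2 := by
      rw [show (-u - u : ℝ × ℝ) = -(u + u) by ring, eta_neg hη, eta_double hη, hu]; norm_num
    rcases hy with hy | hy <;> rw [hy]
    · have e2 : η (v - -u) = η (u + v) := by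
        rw [show (v - -u : ℝ × ℝ) = u + v by ring]
      rw [e1, e2]; linarith
    · have e2 : η (-v - -u) = η (u - v) := by
        rw [show (-v - -u : ℝ × ℝ) = u - v by ring]
      rw [e1, e2]; linarith
  · -- a = v
    rw [ha] at hZ ⊢
    rw [Multiset.cons_swap (-u) v] at hZ
    have hZ' : Z = (-u) ::ₘ (-v) ::ₘ 0 := (Multiset.cons_inj_right _).mp hZ
    rw [hZ'] at hy
    simp only [Multiset.mem_cons, Multiset.notMem_zero, or_false] at hy
    have e1 : η (v - u) = η (u - v) := eta_sub_comm hη v u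
    rcases hy with hy | hy <;> rw [hy]
    · have e2 : η (-u - v) = η (u + v) := by
        rw [show (-u - v : ℝ × ℝ) = -(u + v) by ring, eta_neg hη]
      rw [e1, e2]; linarith
    · have e2 : η (-v - v) = 2 := by
        rw [show (-v - v : ℝ × ℝ) = -(v + v) by ring, eta_neg hη, eta_double hη, hv]; norm_num
      rw [e1, e2]; linarith
  · -- a = -v
    rw [ha] at hZ ⊢
    rw [Multiset.cons_swap v (-v), Multiset.cons_swap (-u) (-v)] at hZ
    have hZ' : Z = (-u) ::ₘ v ::ₘ 0 := (Multiset.cons_inj_right _).mp hZ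
    rw [hZ'] at hy
    simp only [Multiset.mem_cons, Multiset.notMem_zero, or_false] at hy
    have e1 : η (-v - u) = η (u + v) := by
      rw [show (-v - u : ℝ × ℝ) = -(u + v) by ring, eta_neg hη]
    rcases hy with hy | hy <;> rw [hy]
    · have e2 : η (-u - -v) = η (u - v) := by
        rw [show (-u - -v : ℝ × ℝ) = -(u - v) by ring, eta_neg hη]
      rw [e1, e2]; linarith
    · have e2 : η (v - -v) = 2 := by
        rw [show (v - -v : ℝ × ℝ) = v + v by ring, eta_double hη, hv]; norm_num
      rw [e1, e2]; linarith

lemma lb_key (u v : ℝ × ℝ) (hu : η u = 1) (hv : η v = 1)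
    (hL : Lambda η ≤ η (u + v) + η (u - v)) (w a y : ℝ × ℝ) (W : Multiset (ℝ × ℝ))
    (hlab : w ::ₘ a ::ₘ W = u ::ₘ (-u) ::ₘ v ::ₘ (-v) ::ₘ 0) (hy : y ∈ W) :
    η w = 1 ∧ Lambda η ≤ η (a - w) + η (y - a) := by
  have hw : w ∈ u ::ₘ (-u) ::ₘ v ::ₘ (-v) ::ₘ (0 : Multiset (ℝ × ℝ)) := by
    rw [← hlab]; exact Multiset.mem_cons_self _ _
  simp only [Multiset.mem_cons, Multiset.notMem_zero, or_false] at hw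
  have huv' : Lambda η ≤ η (v + u) + η (v - u) := by
    rw [add_comm v u, eta_sub_comm hη v u]; exact hL
  rcases hw with hw | hw | hw | hw <;> rw [hw] at hlab ⊢
  · have h2 : a ::ₘ W = (-u) ::ₘ v ::ₘ (-v) ::ₘ 0 := (Multiset.cons_inj_right _).mp hlab
    exact ⟨hu, lb_core hη u v hu hv hL a y _ h2 hy⟩
  · rw [Multiset.cons_swap u (-u)] at hlab
    have h2 : a ::ₘ W = u ::ₘ v ::ₘ (-v) ::ₘ 0 := (Multiset.cons_inj_right _).mp hlab
    have hnu : η (-u) = 1 := by rw [eta_neg hη]; exact hu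
    have hL2 : Lambda η ≤ η (-u + v) + η (-u - v) := by
      rw [show (-u + v : ℝ × ℝ) = -(u - v) by ring, show (-u - v : ℝ × ℝ) = -(u + v) by ring,
        eta_neg hη, eta_neg hη]
      linarith
    refine ⟨hnu, lb_core hη (-u) v hnu hv hL2 a y _ ?_ hy⟩
    rw [neg_neg]
    exact h2
  · have hre : (u ::ₘ (-u) ::ₘ v ::ₘ (-v) ::ₘ (0 : Multiset (ℝ × ℝ)))
        = v ::ₘ (-v) ::ₘ u ::ₘ (-u) ::ₘ 0 := by
      rw [Multiset.cons_swap (-u) v, Multiset.cons_swap u v, Multiset.cons_swap (-u) (-v),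
        Multiset.cons_swap u (-v)]
    rw [hre] at hlab
    have h2 : a ::ₘ W = (-v) ::ₘ u ::ₘ (-u) ::ₘ 0 := (Multiset.cons_inj_right _).mp hlab
    exact ⟨hv, lb_core hη v u hv hu huv' a y _ h2 hy⟩
  · have hre : (u ::ₘ (-u) ::ₘ v ::ₘ (-v) ::ₘ (0 : Multiset (ℝ × ℝ)))
        = (-v) ::ₘ v ::ₘ u ::ₘ (-u) ::ₘ 0 := by
      rw [Multiset.cons_swap v (-v), Multiset.cons_swap (-u) (-v), Multiset.cons_swap u (-v),
        Multiset.cons_swap (-u) v, Multiset.cons_swap u v]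
    rw [hre] at hlab
    have h2 : a ::ₘ W = v ::ₘ u ::ₘ (-u) ::ₘ 0 := (Multiset.cons_inj_right _).mp hlab
    have hnv : η (-v) = 1 := by rw [eta_neg hη]; exact hv
    have hL2 : Lambda η ≤ η (-v + u) + η (-v - u) := by
      rw [show (-v + u : ℝ × ℝ) = u - v by ring, show (-v - u : ℝ × ℝ) = -(u + v) by ring,
        eta_neg hη]
      linarith
    refine ⟨hnv, lb_core hη (-v) u hnv hu hL2 a y _ ?_ hy⟩
    rw [neg_neg]
    exact h2

lemma lb_main (u v : ℝ × ℝ) (hu : η u = 1) (hv : η v = 1)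
    (hL : η (u + v) + η (u - v) = Lambda η) (T : BTree (ℝ × ℝ))
    (hT : T.labels = ↑[u, -u, v, -v]) : 1 + Lambda η ≤ makespan η 0 T := by
  cases T with
  | nil =>
    exfalso
    have h := congrArg Multiset.card hT
    simp [BTree.labels] at h
  | node w L R =>
    have hlab : w ::ₘ (L.labels + R.labels) = u ::ₘ (-u) ::ₘ v ::ₘ (-v) ::ₘ 0 := hT
    have hcard : Multiset.card (L.labels + R.labels) = 3 := by
      have h := congrArg Multiset.card hlab
      simp only [Multiset.card_cons, Multiset.card_zero] at h
      omega
    have hL' : Lambda η ≤ η (u + v) + η (u - v) := le_of_eq hL.symm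
    rcases le_or_gt 2 (Multiset.card L.labels) with hc | hc
    · obtain ⟨a, Z, hLZ, y, hyZ, hchain⟩ := subtree_two hη L w hc
      have hlab2 : w ::ₘ a ::ₘ (Z + R.labels) = u ::ₘ (-u) ::ₘ v ::ₘ (-v) ::ₘ 0 := by
        rw [← hlab, hLZ, Multiset.cons_add]
      obtain ⟨hw1, hkey⟩ := lb_key hη u v hu hv hL' w a y _ hlab2
        (Multiset.mem_add.mpr (Or.inl hyZ))
      have hmax : makespan η w L ≤ max (makespan η w L) (makespan η w R) := le_max_left _ _
      show 1 + Lambda η ≤ η (w - 0) + max (makespan η w L) (makespan η w R)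
      rw [sub_zero, hw1]
      linarith
    · have hc2 : 2 ≤ Multiset.card R.labels := by
        rw [Multiset.card_add] at hcard; omega
      obtain ⟨a, Z, hRZ, y, hyZ, hchain⟩ := subtree_two hη R w hc2
      have hlab2 : w ::ₘ a ::ₘ (L.labels + Z) = u ::ₘ (-u) ::ₘ v ::ₘ (-v) ::ₘ 0 := by
        rw [← hlab, hRZ, Multiset.add_cons]
      obtain ⟨hw1, hkey⟩ := lb_key hη u v hu hv hL' w a y _ hlab2
        (Multiset.mem_add.mpr (Or.inr hyZ))
      have hmax : makespan η w R ≤ max (makespan η w L) (makespan η w R) := le_max_right _ _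
      show 1 + Lambda η ≤ η (w - 0) + max (makespan η w L) (makespan η w R)
      rw [sub_zero, hw1]
      linarith

end Lower

lemma exists_tree (l : List (ℝ × ℝ)) : ∃ T : BTree (ℝ × ℝ), T.labels = ↑l := by
  induction l with
  | nil => exact ⟨.nil, rfl⟩
  | cons a l ih =>
    obtain ⟨T, hT⟩ := ih
    exact ⟨.node a T .nil, by simp [BTree.labels, hT, Multiset.cons_coe]⟩

/-- for every norm η on ℝ², γ₄(η) = 1 + Λ(η): (i) every sequence of 4 points in
the closed unit η-ball admits a wake-up tree rooted at the origin of makespan at most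
1 + Λ(η), and (ii) there exist 4 points in the closed unit ball for which every wake-up tree
rooted at the origin has makespan at least 1 + Λ(η). -/
theorem ftp_gamma_four_eq_one_add_Lambda (η : ℝ × ℝ → ℝ) (hη : IsNorm η) :
    gammaN η 4 = 1 + Lambda η ∧
    (∀ ps : List (ℝ × ℝ), ps.length = 4 → (∀ p ∈ ps, η p ≤ 1) →
      ∃ T : BTree (ℝ × ℝ), T.labels = ↑ps ∧ makespan η 0 T ≤ 1 + Lambda η) ∧
    (∃ ps : List (ℝ × ℝ), ps.length = 4 ∧ (∀ p ∈ ps, η p ≤ 1) ∧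
      ∀ T : BTree (ℝ × ℝ), T.labels = ↑ps → 1 + Lambda η ≤ makespan η 0 T) := by
  obtain ⟨u, v, hu, hv, hL⟩ := exists_uv_unit hη
  have hball4 : ∀ p ∈ [u, -u, v, -v], η p ≤ 1 := by
    intro p hp
    simp only [List.mem_cons, List.not_mem_nil, or_false] at hp
    rcases hp with hp | hp | hp | hp <;> rw [hp]
    · exact hu.le
    · rw [eta_neg hη]; exact hu.le
    · exact hv.le
    · rw [eta_neg hη]; exact hv.le
  have hbound : ∀ m ∈ { m : ℝ | ∃ ps : List (ℝ × ℝ), ps.length = 4 ∧ (∀ p ∈ ps, η p ≤ 1) ∧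
      m = sInf { t : ℝ | ∃ T : BTree (ℝ × ℝ), T.labels = ↑ps ∧ makespan η 0 T = t } },
      m ≤ 1 + Lambda η := by
    rintro m ⟨ps, hlen, hball, rfl⟩
    obtain ⟨T, hT, hmk⟩ := upper_main hη ps hlen hball
    have hle : sInf { t : ℝ | ∃ T : BTree (ℝ × ℝ), T.labels = ↑ps ∧ makespan η 0 T = t }
        ≤ makespan η 0 T := by
      apply csInf_le
      · refine ⟨0, ?_⟩
        rintro t ⟨T', _, rfl⟩
        exact makespan_nonneg hη 0 T'
      · exact ⟨T, hT, rfl⟩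
    linarith
  refine ⟨?_, fun ps h1 h2 => upper_main hη ps h1 h2,
    ⟨[u, -u, v, -v], rfl, hball4, fun T hT => lb_main hη u v hu hv hL T hT⟩⟩
  unfold gammaN
  apply le_antisymm
  · apply csSup_le
    · refine ⟨sInf { t : ℝ | ∃ T : BTree (ℝ × ℝ), T.labels = ↑([0, 0, 0, 0] : List (ℝ × ℝ)) ∧
        makespan η 0 T = t }, [0, 0, 0, 0], rfl, ?_, rfl⟩
      intro p hp
      simp only [List.mem_cons, List.not_mem_nil, or_false] at hp
      rcases hp with hp | hp | hp | hp <;> rw [hp] <;> rw [eta_zero hη] <;> norm_num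
    · exact hbound
  · have hmem : sInf { t : ℝ | ∃ T : BTree (ℝ × ℝ), T.labels = ↑([u, -u, v, -v] : List (ℝ × ℝ)) ∧
        makespan η 0 T = t } ∈ { m : ℝ | ∃ ps : List (ℝ × ℝ), ps.length = 4 ∧
        (∀ p ∈ ps, η p ≤ 1) ∧
        m = sInf { t : ℝ | ∃ T : BTree (ℝ × ℝ), T.labels = ↑ps ∧ makespan η 0 T = t } } :=
      ⟨[u, -u, v, -v], rfl, hball4, rfl⟩
    have hge : 1 + Lambda η ≤ sInf { t : ℝ | ∃ T : BTree (ℝ × ℝ),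
        T.labels = ↑([u, -u, v, -v] : List (ℝ × ℝ)) ∧ makespan η 0 T = t } := by
      apply le_csInf
      · obtain ⟨T, hT⟩ := exists_tree [u, -u, v, -v]
        exact ⟨makespan η 0 T, T, hT, rfl⟩
      · rintro t ⟨T, hT, rfl⟩
        exact lb_main hη u v hu hv hL T hT
    exact le_trans hge (le_csSup ⟨1 + Lambda η, hbound⟩ hmem)
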